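/- Let I be an ideal on ℕ, S nonempty, B = (B_i)_{i∈S} a family of non-negative matrices with Σ_k b_{nk}^{(i)} < ∞ for all n, i, and Σ_k b_{nk}^{(i)} → 1 along I uniformly in i ∈ S. Let s = (s_n) be a bounded real sequence, a ∈ ℝ, such that s is B^I-summable to a (i.e., Σ_k b_{nk}^{(i)} s_k → a along I uniformly in i) and J_{B,I}-limsup s_n = a. Then s is B^I-statistically convergent to a. -/

import Mathlib

/-- An ideal on ℕ: nonempty collection of subsets, not containing ℕ,
closed under subsets and finite unions. -/
def IsIdeal (I : Set (Set ℕ)) : Prop :=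
  I.Nonempty ∧ Set.univ ∉ I ∧ (∀ A ∈ I, ∀ B, B ⊆ A → B ∈ I) ∧ ∀ A ∈ I, ∀ B ∈ I, A ∪ B ∈ I

/-- Convergence of `g n i` to `g0 i` along the ideal `I`, uniformly in `i ∈ S`. -/
def UnifConvAlong {S : Type*} (I : Set (Set ℕ)) (g : ℕ → S → ℝ) (g0 : S → ℝ) : Prop :=
  ∀ ε > 0, ∃ E ∈ I, ∀ i : S, {n : ℕ | ε ≤ |g n i - g0 i|} ⊆ E

/-- The collection `J_{B,I}` of sets `K ⊆ ℕ` whose matrix transforms tend to 0 along `I`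
uniformly in `i ∈ S`. -/
def matIdeal {S : Type*} (I : Set (Set ℕ)) (b : S → ℕ → ℕ → ℝ) : Set (Set ℕ) :=
  {K : Set ℕ | UnifConvAlong I (fun n i => ∑' k, b i n k * K.indicator 1 k) (fun _ => 0)}

/-- `I`-limit superior of a real sequence. -/
noncomputable def idealLimSup (I : Set (Set ℕ)) (s : ℕ → ℝ) : ℝ :=
  sSup {t : ℝ | {n : ℕ | t < s n} ∉ I}

/-- `I`-limit inferior of a real sequence. -/
noncomputable def idealLimInf (I : Set (Set ℕ)) (s : ℕ → ℝ) : ℝ :=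
  sInf {t : ℝ | {n : ℕ | s n < t} ∉ I}

/-- `I`-convergence of a real sequence to `a`. -/
def IdealConv (I : Set (Set ℕ)) (s : ℕ → ℝ) (a : ℝ) : Prop :=
  ∀ ε > 0, {n : ℕ | ε ≤ |s n - a|} ∈ I

/-- `B^I`-statistical convergence of `s` to `a`. -/
def BStatConv {S : Type*} (I : Set (Set ℕ)) (b : S → ℕ → ℕ → ℝ) (s : ℕ → ℝ) (a : ℝ) : Prop :=
  ∀ ε > 0, UnifConvAlong I
    (fun n i => ∑' k, b i n k * Set.indicator {k : ℕ | ε ≤ |s k - a|} 1 k) (fun _ => 0)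

/-! Since `J_{B,I}-limsup s = a`, every upper tail `{k | t < s k}` with `t > a` lies in `J_{B,I}`.
For a lower tail, `ε · 1[s ≤ a - ε] ≤ (a - s) + θ + (|a| + R) · 1[a + θ < s]` pointwise; averaged
against the rows of `B`, the right-hand side tends to `θ` uniformly along `I`, because the row sums
tend to `1`, the `B`-means tend to `a` and the upper tail lies in `J_{B,I}`. As `{|s - a| ≥ ε}` is
covered by one upper and one lower tail, it lies in `J_{B,I}` too.

Convergence along `I` uniformly in `i` is uniform convergence along the dual filter
`{A | Aᶜ ∈ I}`. -/

section WeightedMass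

variable {w : ℕ → ℝ}

noncomputable def massOf (w : ℕ → ℝ) (K : Set ℕ) : ℝ := ∑' k, w k * K.indicator 1 k

lemma summable_mul_of_abs_le (hw : ∀ k, 0 ≤ w k) (hws : Summable w) {f : ℕ → ℝ} {C : ℝ}
    (hf : ∀ k, |f k| ≤ C) : Summable fun k => w k * f k :=
  Summable.of_norm_bounded (hws.mul_right C) fun k => by
    rw [Real.norm_eq_abs, abs_mul, abs_of_nonneg (hw k)]
    exact mul_le_mul_of_nonneg_left (hf k) (hw k)

lemma abs_indicator_one_le (K : Set ℕ) (k : ℕ) : |K.indicator (1 : ℕ → ℝ) k| ≤ 1 := by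
  by_cases hk : k ∈ K <;> simp [hk]

lemma summable_mul_indicator (hw : ∀ k, 0 ≤ w k) (hws : Summable w) (K : Set ℕ) :
    Summable fun k => w k * K.indicator 1 k :=
  summable_mul_of_abs_le hw hws (abs_indicator_one_le K)

lemma massOf_nonneg (hw : ∀ k, 0 ≤ w k) (K : Set ℕ) : 0 ≤ massOf w K :=
  tsum_nonneg fun k => mul_nonneg (hw k) (Set.indicator_nonneg (fun _ _ => zero_le_one) k)

lemma massOf_le_add_of_subset_union (hw : ∀ k, 0 ≤ w k) (hws : Summable w) {K L M : Set ℕ}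
    (hK : K ⊆ L ∪ M) : massOf w K ≤ massOf w L + massOf w M := by
  refine hasSum_le (fun k => ?_) (summable_mul_indicator hw hws K).hasSum
    ((summable_mul_indicator hw hws L).hasSum.add (summable_mul_indicator hw hws M).hasSum)
  rw [← mul_add]
  refine mul_le_mul_of_nonneg_left ?_ (hw k)
  classical
  have := @hK k
  simp only [Set.indicator_apply, Set.mem_union, Pi.one_apply] at this ⊢
  split_ifs <;> simp_all

lemma mul_massOf_setOf_le_sub_le (hw : ∀ k, 0 ≤ w k) (hws : Summable w) {s : ℕ → ℝ} {R : ℝ}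
    (hs : ∀ k, |s k| ≤ R) (a : ℝ) {θ : ℝ} (hθ : 0 ≤ θ) (ε : ℝ) :
    ε * massOf w {k | s k ≤ a - ε} ≤
      (a * ∑' k, w k - ∑' k, w k * s k) + θ * ∑' k, w k
        + (|a| + R) * massOf w {k | a + θ < s k} := by
  have hpoint : ∀ k, ε * {k | s k ≤ a - ε}.indicator (1 : ℕ → ℝ) k ≤
      a - s k + θ + (|a| + R) * {k | a + θ < s k}.indicator 1 k := by
    intro k
    classical
    have hsk := abs_le.1 (hs k)
    have ha := neg_abs_le a
    simp only [Set.indicator_apply, Set.mem_ofPred_eq, Pi.one_apply]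
    split_ifs <;> nlinarith [abs_nonneg (s k)]
  refine hasSum_le (fun k => ?_) ((summable_mul_indicator hw hws _).hasSum.mul_left ε)
    ((((hws.hasSum.mul_left a).sub (summable_mul_of_abs_le hw hws hs).hasSum).add
      (hws.hasSum.mul_left θ)).add ((summable_mul_indicator hw hws _).hasSum.mul_left (|a| + R)))
  have := mul_le_mul_of_nonneg_left (hpoint k) (hw k)
  linarith

end WeightedMass

lemma tendstoUniformly_const_mul {ι α : Type*} {p : Filter ι} {F : ι → α → ℝ} {f : α → ℝ}
    (c : ℝ) (h : TendstoUniformly F f p) :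
    TendstoUniformly (fun n x => c * F n x) (fun x => c * f x) p :=
  (uniformContinuous_const_smul c).comp_tendstoUniformly h

lemma tendstoUniformly_squeeze_zero {ι α : Type*} {p : Filter ι} {F G : ι → α → ℝ}
    (hF : ∀ n x, 0 ≤ F n x) (hFG : ∀ n x, F n x ≤ G n x)
    (hG : TendstoUniformly G (fun _ => 0) p) : TendstoUniformly F (fun _ => 0) p := by
  rw [Metric.tendstoUniformly_iff] at hG ⊢
  intro ε hε
  filter_upwards [hG ε hε] with n hn x
  have := hn x
  rw [Real.dist_eq, zero_sub, abs_neg, abs_of_nonneg ((hF n x).trans (hFG n x))] at this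
  rw [Real.dist_eq, zero_sub, abs_neg, abs_of_nonneg (hF n x)]
  exact (hFG n x).trans_lt this

lemma setOf_lt_mem_of_idealLimSup_lt {J : Set (Set ℕ)} (hJ : ∅ ∈ J) {s : ℕ → ℝ}
    (hs : BddAbove (Set.range s)) {t : ℝ} (ht : idealLimSup J s < t) : {n | t < s n} ∈ J := by
  by_contra h
  obtain ⟨R, hR⟩ := hs
  have hbdd : BddAbove {u | {n | u < s n} ∉ J} := by
    refine ⟨R, fun u hu => not_lt.1 fun hRu => hu ?_⟩
    convert hJ
    exact Set.eq_empty_of_forall_notMem fun n hn => (hR ⟨n, rfl⟩).not_gt (hRu.trans hn)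
  exact ht.not_ge (le_csSup hbdd h)

namespace IsIdeal

variable {I : Set (Set ℕ)}

lemma empty_mem (hI : IsIdeal I) : ∅ ∈ I :=
  let ⟨A, hA⟩ := hI.1
  hI.2.2.1 A hA ∅ (Set.empty_subset A)

def dualFilter (hI : IsIdeal I) : Filter ℕ :=
  Filter.comk (· ∈ I) hI.empty_mem hI.2.2.1 hI.2.2.2

lemma unifConvAlong_iff_tendstoUniformly (hI : IsIdeal I) {S : Type*} {g : ℕ → S → ℝ}
    {g0 : S → ℝ} :
    UnifConvAlong I g g0 ↔ TendstoUniformly g g0 hI.dualFilter := by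
  rw [Metric.tendstoUniformly_iff]
  refine forall₂_congr fun ε _ => ?_
  simp only [Filter.Eventually, dualFilter, Filter.mem_comk, Set.compl_ofPred, not_forall,
    not_lt, Real.dist_eq, abs_sub_comm (g0 _)]
  constructor
  · rintro ⟨E, hE, hsub⟩
    exact hI.2.2.1 E hE _ fun n ⟨i, hi⟩ => hsub i hi
  · exact fun h => ⟨_, h, fun i n hn => ⟨i, hn⟩⟩

end IsIdeal

section MatIdeal

variable {S : Type*} {I : Set (Set ℕ)} {b : S → ℕ → ℕ → ℝ}

lemma mem_matIdeal_iff (hI : IsIdeal I) {K : Set ℕ} :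
    K ∈ matIdeal I b ↔
      TendstoUniformly (fun n i => massOf (b i n) K) (fun _ => 0) hI.dualFilter :=
  hI.unifConvAlong_iff_tendstoUniformly

lemma empty_mem_matIdeal (hI : IsIdeal I) : ∅ ∈ matIdeal I b :=
  fun _ hε => ⟨∅, hI.empty_mem, fun _ _ hn => hε.not_ge (by simpa using hn)⟩

lemma mem_matIdeal_of_subset_union (hI : IsIdeal I) (hb : ∀ i n k, 0 ≤ b i n k)
    (hrow : ∀ i n, Summable fun k => b i n k) {K L M : Set ℕ} (hK : K ⊆ L ∪ M)
    (hL : L ∈ matIdeal I b) (hM : M ∈ matIdeal I b) : K ∈ matIdeal I b := by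
  rw [mem_matIdeal_iff hI] at hL hM ⊢
  exact tendstoUniformly_squeeze_zero (fun n i => massOf_nonneg (hb i n) K)
    (fun n i => massOf_le_add_of_subset_union (hb i n) (hrow i n) hK)
    (by simpa [Pi.add_def] using hL.add hM)

lemma setOf_le_sub_mem_matIdeal (hI : IsIdeal I) (hb : ∀ i n k, 0 ≤ b i n k)
    (hrow : ∀ i n, Summable fun k => b i n k)
    (h1 : UnifConvAlong I (fun n i => ∑' k, b i n k) (fun _ => 1))
    {s : ℕ → ℝ} {R : ℝ} (hs : ∀ k, |s k| ≤ R) {a : ℝ}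
    (hsum : UnifConvAlong I (fun n i => ∑' k, b i n k * s k) (fun _ => a))
    (hupper : ∀ t > a, {k | t < s k} ∈ matIdeal I b) {ε : ℝ} (hε : 0 < ε) :
    {k | s k ≤ a - ε} ∈ matIdeal I b := by
  rw [mem_matIdeal_iff hI, Metric.tendstoUniformly_iff]
  intro δ hδ
  obtain ⟨θ, hθ, rfl⟩ : ∃ θ, 0 < θ ∧ δ = 2 * θ / ε := ⟨ε * δ / 2, by positivity, by field_simp⟩
  have hP := (mem_matIdeal_iff hI).1 (hupper (a + θ) (by linarith))
  rw [hI.unifConvAlong_iff_tendstoUniformly] at h1 hsum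
  have hbound : TendstoUniformly (fun n i => (a * ∑' k, b i n k - ∑' k, b i n k * s k)
      + θ * ∑' k, b i n k + (|a| + R) * massOf (b i n) {k | a + θ < s k})
      (fun _ => θ) hI.dualFilter := by
    simpa [Pi.add_def, Pi.sub_def] using (((tendstoUniformly_const_mul a h1).sub hsum).add
      (tendstoUniformly_const_mul θ h1)).add (tendstoUniformly_const_mul (|a| + R) hP)
  filter_upwards [Metric.tendstoUniformly_iff.1 hbound θ hθ] with n hn i
  have hmass := mul_massOf_setOf_le_sub_le (hb i n) (hrow i n) hs a hθ.le ε
  have hclose := (abs_lt.1 ((Real.dist_eq _ _).symm.trans_lt (hn i))).1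
  rw [Real.dist_eq, zero_sub, abs_neg, abs_of_nonneg (massOf_nonneg (hb i n) _),
    lt_div_iff₀ hε]
  linarith

end MatIdeal

theorem stmt14_general {S : Type*} (I : Set (Set ℕ)) (hI : IsIdeal I)
    (b : S → ℕ → ℕ → ℝ) (hb : ∀ i n k, 0 ≤ b i n k)
    (hrow : ∀ (i : S) (n : ℕ), Summable fun k => b i n k)
    (h1 : UnifConvAlong I (fun n i => ∑' k, b i n k) (fun _ => 1))
    (s : ℕ → ℝ) (hbdd : ∃ R : ℝ, ∀ n, |s n| ≤ R) (a : ℝ)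
    (hsum : UnifConvAlong I (fun n i => ∑' k, b i n k * s k) (fun _ => a))
    (hls : idealLimSup (matIdeal I b) s = a) :
    BStatConv I b s a := by
  obtain ⟨R, hR⟩ := hbdd
  have hupper : ∀ t > a, {k | t < s k} ∈ matIdeal I b := fun t ht =>
    setOf_lt_mem_of_idealLimSup_lt (empty_mem_matIdeal hI)
      ⟨R, by rintro _ ⟨n, rfl⟩; exact (le_abs_self _).trans (hR n)⟩ (hls ▸ ht)
  intro ε hε
  show {k | ε ≤ |s k - a|} ∈ matIdeal I b
  refine mem_matIdeal_of_subset_union hI hb hrow (fun k (hk : ε ≤ |s k - a|) => ?_)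
    (hupper (a + ε / 2) (by linarith))
    (setOf_le_sub_mem_matIdeal hI hb hrow h1 hR hsum hupper hε)
  rcases le_abs'.1 hk with h | h
  · exact Or.inr (by simp only [Set.mem_ofPred_eq]; linarith)
  · exact Or.inl (by simp only [Set.mem_ofPred_eq]; linarith)

/-- If a bounded real sequence is `B^I`-summable to `a` and `J_{B,I}-limsup s = a`,
then `s` is `B^I`-statistically convergent to `a`. -/
theorem stmt14 {S : Type*} [Nonempty S] (I : Set (Set ℕ)) (hI : IsIdeal I)
    (b : S → ℕ → ℕ → ℝ) (hb : ∀ i n k, 0 ≤ b i n k)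
    (hplus : ∃ i0 : S, 0 < ⨅ n : ℕ, ∑' k, b i0 n k)
    (hrow : ∀ (i : S) (n : ℕ), Summable fun k => b i n k)
    (h1 : UnifConvAlong I (fun n i => ∑' k, b i n k) (fun _ => 1))
    (s : ℕ → ℝ) (hbdd : ∃ R : ℝ, ∀ n, |s n| ≤ R) (a : ℝ)
    (hsum : UnifConvAlong I (fun n i => ∑' k, b i n k * s k) (fun _ => a))
    (hls : idealLimSup (matIdeal I b) s = a) :
    BStatConv I b s a :=
  stmt14_general I hI b hb hrow h1 s hbdd a hsum hls
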